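/- arXiv:2107.12881 — 2 statements merged into one kernel-verified Lean document; each statement's English description precedes it below -/
import Mathlib

section
/- Let D be a directed graph with source s and target t (no edges into s, no edges out of t), |V(D) \ {s,t}| = n, and let w : E(D) → ℝ≥0 be a nonnegative edge-weighting. If P₁, ..., P_{n+1} are directed s–t paths each of total weight at most k, then there exists a rainbow s–t path (its edges injectively assigned to distinct Pᵢ's, each edge in its assigned path) whose total weight is at most k. -/
/-- The list of (directed) edges of a path given as a list of vertices. -/
def pathEdges {V : Type*} (l : List V) : List (V × V) := l.zip l.tail

/-- `l` is a directed `s`–`t` path in the digraph `D`. -/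
def IsSTPath {V : Type*} (D : V → V → Prop) (s t : V) (l : List V) : Prop :=
  l.Chain' D ∧ l.head? = some s ∧ l.getLast? = some t ∧ l.Nodup

/-- The total weight of a path under an edge weighting. -/
def pathWeight {V : Type*} (w : V × V → ℝ) (l : List V) : ℝ :=
  ((pathEdges l).map w).sum

/-!
Induction on the number of inner vertices, for the stronger statement in which every path `P ℓ`
carries its own weighting `w ℓ`. If some path is the single edge `s → t`, it is rainbow by itself.
Otherwise let `s → v` be the cheapest first edge, on the path `P j`. Remove colour `j` and
contract `v` into `s`: every other path through `v` is shortcut to begin with `s → x`, where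
`v → x` is its edge out of `v`, and this new edge is charged `w j (s, v) + w ℓ (v, x)`. By the
choice of `j` this is at most what the discarded part `s ⋯ v → x` cost, and `v` is no longer an
inner vertex. A rainbow path for the shortcut family whose first edge is a shortcut `s → x` is
expanded to `s → v → x`, the new edge `s → v` getting colour `j`; the weight is unchanged.
-/

section

variable {V ι : Type*}

section Paths

variable {l : List V}

lemma pathEdges_cons_cons (a b : V) (l : List V) :
    pathEdges (a :: b :: l) = (a, b) :: pathEdges (b :: l) := rfl

lemma pathEdges_append_cons (l₁ : List V) (v : V) (l₂ : List V) :
    pathEdges (l₁ ++ v :: l₂) = pathEdges (l₁ ++ [v]) ++ pathEdges (v :: l₂) := by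
  induction l₁ using List.twoStepInduction with
  | nil | singleton => rfl
  | cons_cons a b l₁ _ ih =>
    simp only [List.cons_append, pathEdges_cons_cons] at ih ⊢
    rw [ih b]

lemma mem_of_mem_pathEdges {e : V × V} (he : e ∈ pathEdges l) : e.1 ∈ l ∧ e.2 ∈ l :=
  ⟨(List.of_mem_zip he).1, List.mem_of_mem_tail (List.of_mem_zip he).2⟩

lemma exists_mem_pathEdges_of_mem_tail {x : V} (hx : x ∈ l.tail) :
    ∃ e ∈ pathEdges l, e.2 = x := by
  rw [← List.map_snd_zip (l₁ := l) (l₂ := l.tail) (by simp)] at hx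
  simpa [pathEdges] using hx

lemma isChain_iff_forall_mem_pathEdges (D : V → V → Prop) :
    l.IsChain D ↔ ∀ e ∈ pathEdges l, D e.1 e.2 := by
  induction l using List.twoStepInduction with
  | nil | singleton => simp [pathEdges]
  | cons_cons a b l _ ih => simp [pathEdges_cons_cons, List.isChain_cons_cons, ih b]

lemma pathWeight_cons_cons (w : V × V → ℝ) (a b : V) (l : List V) :
    pathWeight w (a :: b :: l) = w (a, b) + pathWeight w (b :: l) := by
  simp [pathWeight, pathEdges_cons_cons]

lemma pathWeight_append_cons (w : V × V → ℝ) (l₁ : List V) (v : V) (l₂ : List V) :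
    pathWeight w (l₁ ++ v :: l₂) = pathWeight w (l₁ ++ [v]) + pathWeight w (v :: l₂) := by
  rw [pathWeight, pathEdges_append_cons, List.map_append, List.sum_append]; rfl

lemma pathWeight_congr {w w' : V × V → ℝ} (h : ∀ e ∈ pathEdges l, w e = w' e) :
    pathWeight w l = pathWeight w' l := by
  simp only [pathWeight, List.map_congr_left h]

lemma le_pathWeight {w : V × V → ℝ} (hw : ∀ e, 0 ≤ w e) {e : V × V}
    (he : e ∈ pathEdges l) : w e ≤ pathWeight w l :=
  List.single_le_sum (by grind) _ (List.mem_map_of_mem he)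

end Paths

section STPath

variable {D : V → V → Prop} {s t : V} {l : List V}

lemma isSTPath_iff : IsSTPath D s t l ↔ IsSTPath ⊤ s t l ∧ ∀ e ∈ pathEdges l, D e.1 e.2 := by
  change l.IsChain D ∧ _ ↔ (l.IsChain ⊤ ∧ _) ∧ _
  simp only [isChain_iff_forall_mem_pathEdges, Pi.top_apply, Prop.top_eq_true, implies_true,
    true_and]
  tauto

lemma isSTPath_top_iff :
    IsSTPath ⊤ s t l ↔ l.head? = some s ∧ l.getLast? = some t ∧ l.Nodup := by
  change l.IsChain ⊤ ∧ _ ↔ _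
  simp [isChain_iff_forall_mem_pathEdges]

lemma IsSTPath.exists_eq_cons_cons (h : IsSTPath D s t l) (hst : s ≠ t) :
    ∃ y L, l = s :: y :: L := by
  obtain ⟨-, hs, ht, -⟩ := h
  rcases l with _ | ⟨a, _ | ⟨y, L⟩⟩ <;> simp_all

lemma IsSTPath.ne_of_two_le_length (h : IsSTPath D s t l) (hl : 2 ≤ l.length) : s ≠ t := by
  rintro rfl
  obtain ⟨-, hs, ht, hnd⟩ := h
  rcases l with _ | ⟨a, _ | ⟨y, L⟩⟩ <;> simp only [List.length_cons, List.length_nil] at hl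
  · omega
  · omega
  obtain rfl : a = s := by simpa using hs
  rw [List.getLast?_cons_cons] at ht
  exact (List.nodup_cons.mp hnd).1 (List.mem_of_getLast? ht)

lemma IsSTPath.exists_eq_cons_cons_of_two_lt_length (h : IsSTPath D s t l) (hl : 2 < l.length) :
    ∃ y L, l = s :: y :: L ∧ y ≠ s ∧ y ≠ t := by
  obtain ⟨y, L, rfl⟩ := h.exists_eq_cons_cons (h.ne_of_two_le_length hl.le)
  obtain ⟨-, -, ht, hnd⟩ := h
  rcases L with _ | ⟨z, L⟩
  · simp at hl
  rw [List.getLast?_cons_cons, List.getLast?_cons_cons] at ht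
  refine ⟨y, z :: L, rfl, ?_, ?_⟩ <;> rintro rfl
  · simp at hnd
  · exact (List.nodup_cons.mp (List.nodup_cons.mp hnd).2).1 (List.mem_of_getLast? ht)

end STPath

def IsRainbow (P : ι → List V) (Q : List V) (c : V × V → ι) : Prop :=
  Set.InjOn c {e | e ∈ pathEdges Q} ∧ ∀ e ∈ pathEdges Q, e ∈ pathEdges (P (c e))

section Rainbow

variable {P : ι → List V} {Q : List V} {c : V × V → ι}

lemma isRainbow_const_of_length_le_two {ℓ : ι} (h : (P ℓ).length ≤ 2) :
    IsRainbow P (P ℓ) fun _ => ℓ := by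
  refine ⟨Set.Subsingleton.injOn ?_ _, fun _ he => he⟩
  generalize P ℓ = l at h ⊢
  rcases l with _ | ⟨a, _ | ⟨b, _ | ⟨x, L⟩⟩⟩
  all_goals simp_all [pathEdges, Set.Subsingleton]

lemma IsRainbow.exists_mem_of_mem_tail (hc : IsRainbow P Q c) {x : V} (hx : x ∈ Q.tail) :
    ∃ ℓ, x ∈ P ℓ := by
  obtain ⟨e, he, rfl⟩ := exists_mem_pathEdges_of_mem_tail hx
  exact ⟨c e, (mem_of_mem_pathEdges (hc.2 e he)).2⟩

lemma IsRainbow.of_cons {a b : V} (hc : IsRainbow P (a :: b :: Q) c) : IsRainbow P (b :: Q) c :=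
  ⟨hc.1.mono fun _ he => List.mem_cons_of_mem _ he, fun e he => hc.2 e (List.mem_cons_of_mem _ he)⟩

lemma IsRainbow.ne_of_cons {a b : V} (hc : IsRainbow P (a :: b :: Q) c) (ha : a ∉ b :: Q)
    {e : V × V} (he : e ∈ pathEdges (b :: Q)) : c e ≠ c (a, b) := fun h => by
  have hea : e.1 = a := congrArg Prod.fst (hc.1 (List.mem_cons_of_mem _ he) List.mem_cons_self h)
  exact ha (hea ▸ (mem_of_mem_pathEdges he).1)

lemma IsRainbow.comp {κ : Type*} {P' : κ → List V} {f : ι → κ} (hc : IsRainbow P Q c)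
    (hf : Function.Injective f)
    (hP : ∀ e ∈ pathEdges Q, e ∈ pathEdges (P (c e)) → e ∈ pathEdges (P' (f (c e)))) :
    IsRainbow P' Q (f ∘ c) :=
  ⟨hf.comp_injOn hc.1, fun e he => hP e he (hc.2 e he)⟩

lemma IsRainbow.cons [DecidableEq V] {a b : V} {i : ι} (hc : IsRainbow P (b :: Q) c)
    (ha : a ∉ b :: Q) (hab : (a, b) ∈ pathEdges (P i)) (hi : ∀ e ∈ pathEdges (b :: Q), c e ≠ i) :
    IsRainbow P (a :: b :: Q) (Function.update c (a, b) i) := by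
  have hab' : (a, b) ∉ pathEdges (b :: Q) := fun h => ha (mem_of_mem_pathEdges h).1
  have hupd : ∀ e ∈ pathEdges (b :: Q), Function.update c (a, b) i e = c e := fun e he =>
    Function.update_of_ne (by rintro rfl; exact hab' he) _ _
  refine ⟨?_, ?_⟩
  · simp only [pathEdges_cons_cons, List.mem_cons, Set.ofPred_or, Set.ofPred_eq_eq_singleton,
      Set.singleton_union]
    rw [Set.injOn_insert (show (a, b) ∉ {e | e ∈ pathEdges (b :: Q)} from hab'),
      Function.update_self]
    refine ⟨hc.1.congr fun e he => (hupd e he).symm, ?_⟩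
    rintro ⟨e, he, hei⟩
    exact hi e he (hupd e he ▸ hei)
  · simp only [pathEdges_cons_cons, List.mem_cons, forall_eq_or_imp, Function.update_self]
    exact ⟨hab, fun e he => hupd e he ▸ hc.2 e he⟩

lemma pathWeight_update_cons [DecidableEq V] (w : ι → V × V → ℝ) (c : V × V → ι) (i : ι)
    {a b : V} (ha : a ∉ b :: Q) :
    pathWeight (fun e => w (Function.update c (a, b) i e) e) (a :: b :: Q) =
      w i (a, b) + pathWeight (fun e => w (c e) e) (b :: Q) := by
  rw [pathWeight_cons_cons, Function.update_self]
  congr 1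
  refine pathWeight_congr fun e he => ?_
  rw [Function.update_of_ne]
  rintro rfl
  exact ha (mem_of_mem_pathEdges he).1

end Rainbow

def innerVertices (s t : V) (P : ι → List V) : Set V := {x | (∃ ℓ, x ∈ P ℓ) ∧ x ≠ s ∧ x ≠ t}

lemma finite_innerVertices [Finite ι] (s t : V) (P : ι → List V) :
    (innerVertices s t P).Finite :=
  (Set.finite_iUnion fun ℓ => (P ℓ).finite_toSet).subset fun _ hx => Set.mem_iUnion.mpr hx.1

section Shortcut

variable [DecidableEq V] {D : V → V → Prop} {s t v : V} {l : List V} {a : ℝ} {w : V × V → ℝ}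

def shortcut (s v : V) (l : List V) : List V :=
  if v ∈ l then s :: l.drop (l.idxOf v + 1) else l

def shortcutWeight (s v : V) (a : ℝ) (l : List V) (w : V × V → ℝ) (e : V × V) : ℝ :=
  if e.1 = s ∧ v ∈ l then a + w (v, e.2) else w e

lemma shortcut_of_notMem (hv : v ∉ l) : shortcut s v l = l := if_neg hv

lemma shortcutWeight_of_notMem (hv : v ∉ l) : shortcutWeight s v a l w = w :=
  funext fun _ => if_neg fun h => hv h.2

lemma shortcutWeight_of_fst_ne {e : V × V} (he : e.1 ≠ s) : shortcutWeight s v a l w e = w e :=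
  if_neg fun h => he h.1

lemma shortcutWeight_nonneg (ha : 0 ≤ a) (hw : ∀ e, 0 ≤ w e) (e : V × V) :
    0 ≤ shortcutWeight s v a l w e := by
  unfold shortcutWeight
  split_ifs
  exacts [add_nonneg ha (hw _), hw e]

lemma shortcutWeight_of_mem (hv : v ∈ l) (x : V) :
    shortcutWeight s v a l w (s, x) = a + w (v, x) :=
  if_pos ⟨rfl, hv⟩

lemma IsSTPath.exists_eq_append_of_mem (h : IsSTPath D s t l) (hv : v ∈ l) (hvs : v ≠ s)
    (hvt : v ≠ t) : ∃ A x B, l = s :: A ++ v :: x :: B ∧ shortcut s v l = s :: x :: B := by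
  obtain ⟨-, hs, ht, hnd⟩ := h
  obtain ⟨l₁, l₂, rfl⟩ := List.append_of_mem hv
  have hsc : shortcut s v (l₁ ++ v :: l₂) = s :: l₂ := by
    have hv₁ : v ∉ l₁ := fun h => (List.nodup_middle.mp hnd |> List.nodup_cons.mp).1
      (List.mem_append_left _ h)
    simp [shortcut, List.idxOf_append_of_notMem hv₁, List.drop_append]
  rcases l₁ with _ | ⟨a, A⟩
  · simp_all
  rcases l₂ with _ | ⟨x, B⟩
  · simp only [List.getLast?_append, List.getLast?_singleton, Option.some_or] at ht
    exact absurd (Option.some_injective _ ht) hvt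
  obtain rfl : a = s := by simpa using hs
  exact ⟨A, x, B, rfl, hsc⟩

lemma IsSTPath.isSTPath_shortcut (h : IsSTPath D s t l) (hvs : v ≠ s) (hvt : v ≠ t) :
    IsSTPath ⊤ s t (shortcut s v l) := by
  by_cases hv : v ∈ l
  · obtain ⟨A, x, B, rfl, hsc⟩ := h.exists_eq_append_of_mem hv hvs hvt
    obtain ⟨-, -, ht, hnd⟩ := h
    have hsub : (s :: x :: B).Sublist (s :: A ++ v :: x :: B) :=
      ((List.sublist_cons_self v (x :: B)).trans (List.sublist_append_right A _)).cons_cons s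
    rw [hsc, isSTPath_top_iff]
    refine ⟨rfl, ?_, hnd.sublist hsub⟩
    rwa [List.getLast?_append_cons, List.getLast?_cons_cons, ← List.getLast?_cons_cons (a := s)]
      at ht
  · rw [shortcut_of_notMem hv]
    exact (isSTPath_iff.mp h).1

lemma IsSTPath.notMem_shortcut (h : IsSTPath D s t l) (hvs : v ≠ s) (hvt : v ≠ t) :
    v ∉ shortcut s v l := by
  by_cases hv : v ∈ l
  · obtain ⟨A, x, B, rfl, hsc⟩ := h.exists_eq_append_of_mem hv hvs hvt
    have hnd := (List.nodup_append.mp h.2.2.2).2.1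
    rw [hsc]
    simp_all
  · rwa [shortcut_of_notMem hv]

lemma IsSTPath.shortcut_subset (h : IsSTPath D s t l) (hvs : v ≠ s) (hvt : v ≠ t) :
    shortcut s v l ⊆ l := by
  by_cases hv : v ∈ l
  · obtain ⟨A, x, B, rfl, hsc⟩ := h.exists_eq_append_of_mem hv hvs hvt
    rw [hsc]
    intro y
    simp +contextual [or_imp]
  · rw [shortcut_of_notMem hv]
    exact List.Subset.refl l

lemma IsSTPath.mem_pathEdges_of_mem_pathEdges_shortcut (h : IsSTPath D s t l) (hvs : v ≠ s)
    (hvt : v ≠ t) {e : V × V} (he : e ∈ pathEdges (shortcut s v l)) (hes : e.1 ≠ s) :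
    e ∈ pathEdges l := by
  by_cases hv : v ∈ l
  · obtain ⟨A, x, B, rfl, hsc⟩ := h.exists_eq_append_of_mem hv hvs hvt
    rw [hsc, pathEdges_cons_cons, List.mem_cons] at he
    rw [pathEdges_append_cons, pathEdges_cons_cons]
    rcases he with rfl | he
    · exact absurd rfl hes
    · simp [he]
  · rwa [shortcut_of_notMem hv] at he

lemma IsSTPath.mem_pathEdges_of_mem_pathEdges_shortcut_of_mem (h : IsSTPath D s t l)
    (hvs : v ≠ s) (hvt : v ≠ t) (hv : v ∈ l) {q : V}
    (he : (s, q) ∈ pathEdges (shortcut s v l)) : (v, q) ∈ pathEdges l := by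
  obtain ⟨A, x, B, rfl, hsc⟩ := h.exists_eq_append_of_mem hv hvs hvt
  have hs : s ∉ x :: B := fun hs => (List.nodup_cons.mp h.2.2.2).1 (by simp [hs])
  rw [hsc, pathEdges_cons_cons, List.mem_cons] at he
  rw [pathEdges_append_cons, pathEdges_cons_cons]
  rcases he with he | he
  · obtain rfl : q = x := (Prod.ext_iff.mp he).2
    simp
  · exact absurd (mem_of_mem_pathEdges he).1 hs

lemma IsSTPath.pathWeight_shortcut_le (h : IsSTPath D s t l) (hvs : v ≠ s) (hvt : v ≠ t)
    (hw : ∀ e, 0 ≤ w e) {y : V} {L : List V} (hl : l = s :: y :: L)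
    (ha : a ≤ w (s, y)) :
    pathWeight (shortcutWeight s v a l w) (shortcut s v l) ≤ pathWeight w l := by
  by_cases hv : v ∈ l
  · obtain ⟨A, x, B, rfl, hsc⟩ := h.exists_eq_append_of_mem hv hvs hvt
    have hs : s ∉ x :: B := fun hs => (List.nodup_cons.mp h.2.2.2).1 (by simp [hs])
    have hsy : (s, y) ∈ pathEdges (s :: A ++ [v]) := by
      rcases A with _ | ⟨b, A⟩ <;> simp_all [pathEdges_cons_cons]
    have htail : pathWeight (shortcutWeight s v a (s :: A ++ v :: x :: B) w) (x :: B) =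
        pathWeight w (x :: B) :=
      pathWeight_congr fun e he => shortcutWeight_of_fst_ne
        fun h' => hs (h' ▸ (mem_of_mem_pathEdges he).1)
    rw [hsc, pathWeight_cons_cons, htail, pathWeight_append_cons, pathWeight_cons_cons,
      shortcutWeight_of_mem hv]
    linarith [le_pathWeight hw hsy]
  · rw [shortcut_of_notMem hv, shortcutWeight_of_notMem hv]

lemma innerVertices_shortcut_subset {κ : Type*} {P : ι → List V} (f : κ → ι)
    (hP : ∀ ℓ, IsSTPath D s t (P ℓ)) (hvs : v ≠ s) (hvt : v ≠ t) :
    innerVertices s t (fun k => shortcut s v (P (f k))) ⊆ innerVertices s t P \ {v} := by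
  rintro x ⟨⟨k, hx⟩, hxs, hxt⟩
  exact ⟨⟨⟨f k, (hP _).shortcut_subset hvs hvt hx⟩, hxs, hxt⟩,
    fun h => (hP _).notMem_shortcut hvs hvt (h ▸ hx)⟩

lemma exists_isRainbow_of_isRainbow_shortcut {P : ι → List V} {j : ι} (w : ι → V × V → ℝ)
    (hP : ∀ ℓ, IsSTPath ⊤ s t (P ℓ)) (hvs : v ≠ s) (hvt : v ≠ t) (hst : s ≠ t)
    (hsv : (s, v) ∈ pathEdges (P j)) {Q : List V} (hQ : IsSTPath ⊤ s t Q)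
    {c : V × V → {ℓ // ℓ ≠ j}} (hc : IsRainbow (fun ℓ : {ℓ // ℓ ≠ j} => shortcut s v (P ℓ)) Q c) :
    ∃ Q' c', IsSTPath ⊤ s t Q' ∧ IsRainbow P Q' c' ∧
      pathWeight (fun e => w (c' e) e) Q' =
        pathWeight (fun e => shortcutWeight s v (w j (s, v)) (P (c e)) (w (c e)) e) Q := by
  obtain ⟨q, R, rfl⟩ := hQ.exists_eq_cons_cons hst
  have hsq : (s, q) ∈ pathEdges (s :: q :: R) := List.mem_cons_self
  have hsR : s ∉ q :: R := (List.nodup_cons.mp hQ.2.2.2).1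
  have hvR : v ∉ q :: R := fun hv => by
    obtain ⟨ℓ, hℓ⟩ := hc.exists_mem_of_mem_tail hv
    exact (hP ℓ).notMem_shortcut hvs hvt hℓ
  have hfst : ∀ e ∈ pathEdges (q :: R), e.1 ≠ s := fun e he h =>
    hsR (h ▸ (mem_of_mem_pathEdges he).1)
  have htail : IsRainbow P (q :: R) (Subtype.val ∘ c) := hc.of_cons.comp Subtype.val_injective
    fun e he h => (hP _).mem_pathEdges_of_mem_pathEdges_shortcut hvs hvt h (hfst e he)
  have hfresh : ∀ e ∈ pathEdges (q :: R), (c e : ι) ≠ c (s, q) := fun e he h =>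
    hc.ne_of_cons hsR he (Subtype.ext h)
  have hweight : pathWeight (fun e => shortcutWeight s v (w j (s, v)) (P (c e)) (w (c e)) e)
      (q :: R) = pathWeight (fun e => w ((Subtype.val ∘ c) e) e) (q :: R) :=
    pathWeight_congr fun e he => shortcutWeight_of_fst_ne (hfst e he)
  by_cases hv : v ∈ P (c (s, q))
  · have hsvR : s ∉ v :: q :: R := by simp [hvs.symm, hsR]
    refine ⟨s :: v :: q :: R,
      Function.update (Function.update (Subtype.val ∘ c) (v, q) (c (s, q))) (s, v) j, ?_, ?_, ?_⟩
    · obtain ⟨-, -, ht, hnd⟩ := hQ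
      rw [isSTPath_top_iff]
      simp_all
    · refine (htail.cons hvR ?_ hfresh).cons hsvR hsv fun e _ => ?_
      · exact (hP _).mem_pathEdges_of_mem_pathEdges_shortcut_of_mem hvs hvt hv (hc.2 _ hsq)
      · rw [Function.update_apply]
        split_ifs
        exacts [(c (s, q)).2, (c e).2]
    · rw [pathWeight_update_cons _ _ _ hsvR, pathWeight_update_cons _ _ _ hvR,
        pathWeight_cons_cons, hweight, shortcutWeight_of_mem hv, add_assoc]
  · have hsq' : (s, q) ∈ pathEdges (shortcut s v (P (c (s, q)))) := hc.2 _ hsq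
    rw [shortcut_of_notMem hv] at hsq'
    refine ⟨s :: q :: R, Function.update (Subtype.val ∘ c) (s, q) (c (s, q)), hQ,
      htail.cons hsR hsq' hfresh, ?_⟩
    rw [pathWeight_update_cons _ _ _ hsR, pathWeight_cons_cons, hweight,
      shortcutWeight_of_notMem hv]

end Shortcut

theorem exists_isRainbow_pathWeight_le_of_ncard_lt {s t : V} [Fintype ι] (P : ι → List V)
    (w : ι → V × V → ℝ) (k : ℝ) (hw : ∀ ℓ e, 0 ≤ w ℓ e) (hP : ∀ ℓ, IsSTPath ⊤ s t (P ℓ))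
    (hPw : ∀ ℓ, pathWeight (w ℓ) (P ℓ) ≤ k)
    (hcard : (innerVertices s t P).ncard < Fintype.card ι) :
    ∃ Q c, IsSTPath ⊤ s t Q ∧ IsRainbow P Q c ∧ pathWeight (fun e => w (c e) e) Q ≤ k := by
  classical
  induction hn : Fintype.card ι generalizing ι with
  | zero => omega
  | succ n ih =>
    by_cases hshort : ∃ ℓ, (P ℓ).length ≤ 2
    · obtain ⟨ℓ, hℓ⟩ := hshort
      exact ⟨P ℓ, fun _ => ℓ, hP ℓ, isRainbow_const_of_length_le_two hℓ, hPw ℓ⟩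
    simp only [not_exists, not_le] at hshort
    choose y L hyL hys hyt using fun ℓ => (hP ℓ).exists_eq_cons_cons_of_two_lt_length (hshort ℓ)
    have : Nonempty ι := Fintype.card_pos_iff.mp (by omega)
    obtain ⟨j, hj⟩ := Finite.exists_min fun ℓ => w ℓ (s, y ℓ)
    have hsv : (s, y j) ∈ pathEdges (P j) := by rw [hyL j]; exact List.mem_cons_self
    have hv : y j ∈ innerVertices s t P := ⟨⟨j, (mem_of_mem_pathEdges hsv).2⟩, hys j, hyt j⟩
    have hcard_ne : Fintype.card {ℓ // ℓ ≠ j} = n := by simp [hn]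
    have hcard' : (innerVertices s t fun ℓ : {ℓ // ℓ ≠ j} => shortcut s (y j) (P ℓ)).ncard <
        Fintype.card {ℓ // ℓ ≠ j} :=
      calc _ ≤ (innerVertices s t P \ {y j}).ncard :=
            Set.ncard_le_ncard (innerVertices_shortcut_subset _ hP (hys j) (hyt j))
              (finite_innerVertices s t P).sdiff
        _ = (innerVertices s t P).ncard - 1 := Set.ncard_sdiff_singleton_of_mem hv
        _ < _ := by
          have := (Set.ncard_pos (finite_innerVertices s t P)).mpr ⟨_, hv⟩
          omega
    obtain ⟨Q, c, hQ, hc, hQw⟩ := ih (ι := {ℓ // ℓ ≠ j}) (fun ℓ => shortcut s (y j) (P ℓ))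
      (fun ℓ => shortcutWeight s (y j) (w j (s, y j)) (P ℓ) (w ℓ))
      (fun ℓ => shortcutWeight_nonneg (hw j _) (hw ℓ))
      (fun ℓ => (hP ℓ).isSTPath_shortcut (hys j) (hyt j))
      (fun ℓ => ((hP ℓ).pathWeight_shortcut_le (hys j) (hyt j) (hw ℓ) (hyL ℓ) (hj ℓ)).trans (hPw ℓ))
      hcard' hcard_ne
    obtain ⟨Q', c', hQ', hc', hQ'w⟩ := exists_isRainbow_of_isRainbow_shortcut w hP (hys j) (hyt j)
      ((hP j).ne_of_two_le_length (hshort j).le) hsv hQ hc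
    exact ⟨Q', c', hQ', hc', hQ'w ▸ hQw⟩

end

theorem rainbow_path_weighted_general {V : Type*} [Fintype V] (D : V → V → Prop)
    (s t : V) {n : ℕ}
    (hn : ({v : V | v ≠ s ∧ v ≠ t}).ncard = n)
    (w : V × V → ℝ) (hw : ∀ e, 0 ≤ w e) (k : ℝ)
    (P : Fin (n + 1) → List V) (hP : ∀ i, IsSTPath D s t (P i))
    (hPw : ∀ i, pathWeight w (P i) ≤ k) :
    ∃ Q : List V, IsSTPath D s t Q ∧ pathWeight w Q ≤ k ∧
      ∃ c : V × V → Fin (n + 1),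
        Set.InjOn c {e | e ∈ pathEdges Q} ∧
        ∀ e ∈ pathEdges Q, e ∈ pathEdges (P (c e)) := by
  have hcard : (innerVertices s t P).ncard < Fintype.card (Fin (n + 1)) := by
    rw [Fintype.card_fin, Nat.lt_succ_iff]
    exact (Set.ncard_le_ncard (fun x hx => hx.2) (Set.toFinite _)).trans hn.le
  obtain ⟨Q, c, hQ, hc, hQw⟩ := exists_isRainbow_pathWeight_le_of_ncard_lt P (fun _ => w) k
    (fun _ => hw) (fun i => (isSTPath_iff.mp (hP i)).1) hPw hcard
  exact ⟨Q, isSTPath_iff.mpr ⟨hQ, fun e he => (isSTPath_iff.mp (hP (c e))).2 e (hc.2 e he)⟩,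
    hQw, c, hc⟩

/-- Weighted rainbow path theorem: with `n` inner vertices and a nonnegative
edge weighting, `n+1` directed `s`–`t` paths of weight at most `k` have a
rainbow `s`–`t` path of weight at most `k`. -/
theorem rainbow_path_weighted {V : Type*} [Fintype V] (D : V → V → Prop)
    (s t : V) (hs : ∀ v, ¬ D v s) (ht : ∀ v, ¬ D t v) {n : ℕ}
    (hn : ({v : V | v ≠ s ∧ v ≠ t}).ncard = n)
    (w : V × V → ℝ) (hw : ∀ e, 0 ≤ w e) (k : ℝ)
    (P : Fin (n + 1) → List V) (hP : ∀ i, IsSTPath D s t (P i))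
    (hPw : ∀ i, pathWeight w (P i) ≤ k) :
    ∃ Q : List V, IsSTPath D s t Q ∧ pathWeight w Q ≤ k ∧
      ∃ c : V × V → Fin (n + 1),
        Set.InjOn c {e | e ∈ pathEdges Q} ∧
        ∀ e ∈ pathEdges Q, e ∈ pathEdges (P (c e)) :=
  rainbow_path_weighted_general D s t hn w hw k P hP hPw
end

section
/- Let M be a matroid on ground set V, and let A₁, ..., Aₘ be subsets of V. If rank(⋃_{i∈I} Aᵢ) ≥ |I| for every I ⊆ [m], then there exist pairwise distinct elements aᵢ ∈ Aᵢ, one for each i ∈ [m], such that {a₁, ..., aₘ} is independent in M. -/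
/-!
If some `A j` contains two elements `x ≠ y`, then deleting `x` or deleting `y` from `A j` keeps the
rank condition. Otherwise there are `K ∋ j` and `L ∋ j` violating it after the respective
deletions; the corresponding unions `X` and `Y` cover `⋃_{K ∪ L} A` and their intersection covers
`⋃_{(K ∩ L) \ {j}} A`, so submodularity gives
`|K ∪ L| + |K ∩ L| - 1 ≤ r(X ∪ Y) + r(X ∩ Y) ≤ r X + r Y ≤ |K| + |L| - 2`.
Shrinking the sets in this way until all are singletons `{a i}`, the rank condition for the whole
index set says that `a` is injective with independent range.
-/

/-- The rank of a set `X` in a matroid `M`: the largest size of an independent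
subset of `X`. -/
noncomputable def Matroid.setRk {α : Type*} (M : Matroid α) (X : Set α) : ℕ :=
  sSup {n : ℕ | ∃ I, M.Indep I ∧ I ⊆ X ∧ I.ncard = n}

open Set Function

theorem Set.biUnion_update_of_notMem {α ι : Type*} [DecidableEq ι] (A : ι → Set α) {K : Finset ι}
    {j : ι} (hj : j ∉ K) (S : Set α) : ⋃ i ∈ K, update A j S i = ⋃ i ∈ K, A i :=
  iUnion₂_congr fun _ hi => update_of_ne (ne_of_mem_of_not_mem hi hj) S A

namespace Matroid

variable {α ι : Type*} {M : Matroid α} {X Y I : Set α}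

section setRk

variable [M.RankFinite]

theorem cast_setRk_eq_eRk (X : Set α) : (M.setRk X : ℕ∞) = M.eRk X := by
  obtain ⟨I, hI⟩ := M.exists_isBasis' X
  have hIfin : I.Finite := hI.indep.finite
  have hmax : ∀ J, M.Indep J → J ⊆ X → J.ncard ≤ I.ncard := fun J hJ hJX => by
    have := hJ.encard_le_eRk_of_subset hJX
    rwa [← hI.encard_eq_eRk, ← hJ.finite.cast_ncard_eq, ← hIfin.cast_ncard_eq, Nat.cast_le] at this
  rw [← hI.encard_eq_eRk, ← hIfin.cast_ncard_eq, Nat.cast_inj]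
  refine le_antisymm (csSup_le ⟨_, I, hI.indep, hI.subset, rfl⟩ ?_)
    (le_csSup ⟨I.ncard, ?_⟩ ⟨I, hI.indep, hI.subset, rfl⟩) <;>
  · rintro _ ⟨J, hJ, hJX, rfl⟩
    exact hmax J hJ hJX

theorem setRk_mono (hXY : X ⊆ Y) : M.setRk X ≤ M.setRk Y := by
  have := M.eRk_mono hXY
  rwa [← cast_setRk_eq_eRk, ← cast_setRk_eq_eRk, Nat.cast_le] at this

theorem setRk_inter_add_setRk_union_le (X Y : Set α) :
    M.setRk (X ∩ Y) + M.setRk (X ∪ Y) ≤ M.setRk X + M.setRk Y := by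
  have := M.eRk_inter_add_eRk_union_le X Y
  simp only [← cast_setRk_eq_eRk] at this
  exact_mod_cast this

theorem setRk_inter_ground (X : Set α) : M.setRk (X ∩ M.E) = M.setRk X := by
  rw [← Nat.cast_inj (R := ℕ∞), cast_setRk_eq_eRk, cast_setRk_eq_eRk, eRk_inter_ground]

theorem setRk_le_ncard (hX : X.Finite) : M.setRk X ≤ X.ncard := by
  rw [← Nat.cast_le (α := ℕ∞), cast_setRk_eq_eRk, hX.cast_ncard_eq]
  exact M.eRk_le_encard X

theorem indep_of_ncard_le_setRk (hI : I.Finite) (h : I.ncard ≤ M.setRk I) : M.Indep I := by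
  rw [indep_iff_eRk_eq_encard_of_finite hI, ← cast_setRk_eq_eRk, ← hI.cast_ncard_eq, Nat.cast_inj]
  exact le_antisymm (setRk_le_ncard hI) h

end setRk

def RadoCondition (M : Matroid α) (A : ι → Set α) : Prop :=
  ∀ K : Finset ι, K.card ≤ M.setRk (⋃ i ∈ K, A i)

def IsIndepTransversal (M : Matroid α) (A : ι → Set α) (a : ι → α) : Prop :=
  Injective a ∧ (∀ i, a i ∈ A i) ∧ M.Indep (range a)

variable {A B : ι → Set α} {a : ι → α}

theorem IsIndepTransversal.mono (h : M.IsIndepTransversal A a) (hAB : A ≤ B) :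
    M.IsIndepTransversal B a :=
  ⟨h.1, fun i => hAB i (h.2.1 i), h.2.2⟩

variable [M.RankFinite]

theorem RadoCondition.inter_ground (h : M.RadoCondition A) :
    M.RadoCondition fun i => A i ∩ M.E := by
  intro K
  rw [← iUnion₂_inter, setRk_inter_ground]
  exact h K

theorem RadoCondition.nonempty (h : M.RadoCondition A) {i : ι} (hA : (A i).Finite) :
    (A i).Nonempty := by
  have := (h {i}).trans (setRk_le_ncard (M := M) (by simpa using hA))
  simp only [Finset.card_singleton, Finset.mem_singleton, iUnion_iUnion_eq_left] at this
  exact nonempty_of_ncard_ne_zero (by omega)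

theorem RadoCondition.isIndepTransversal_singleton [Fintype ι]
    (h : M.RadoCondition fun i => {a i}) : M.IsIndepTransversal (fun i => {a i}) a := by
  classical
  have hunion : (⋃ i ∈ Finset.univ, ({a i} : Set α)) = range a := by simp
  have hrk := h Finset.univ
  rw [hunion] at hrk
  have hcard := hrk.trans (setRk_le_ncard (finite_range a))
  have hrange : (range a).ncard = (Finset.univ.image a).card := by
    rw [← ncard_coe_finset, Finset.coe_image, Finset.coe_univ, image_univ]
  have hinj : (Finset.univ.image a).card = Finset.univ.card :=
    le_antisymm Finset.card_image_le (hrange ▸ hcard)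
  refine ⟨injOn_univ.1 (by simpa using Finset.card_image_iff.1 hinj), fun i => rfl,
    indep_of_ncard_le_setRk (finite_range a) ?_⟩
  rw [hrange, hinj]
  exact hrk

theorem RadoCondition.update_sdiff_singleton_or [DecidableEq ι] (h : M.RadoCondition A) {j : ι}
    {x y : α} (hxy : x ≠ y) :
    M.RadoCondition (update A j (A j \ {x})) ∨ M.RadoCondition (update A j (A j \ {y})) := by
  by_contra! ⟨hKx, hLy⟩
  simp only [RadoCondition, not_forall, not_le] at hKx hLy
  obtain ⟨K, hK⟩ := hKx
  obtain ⟨L, hL⟩ := hLy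
  set X := ⋃ i ∈ K, update A j (A j \ {x}) i
  set Y := ⋃ i ∈ L, update A j (A j \ {y}) i
  have hjK : j ∈ K := by
    by_contra hjK
    exact (h K).not_gt (biUnion_update_of_notMem A hjK _ ▸ hK)
  have hjL : j ∈ L := by
    by_contra hjL
    exact (h L).not_gt (biUnion_update_of_notMem A hjL _ ▸ hL)
  have hunion : ⋃ i ∈ K ∪ L, A i ⊆ X ∪ Y := by
    intro w hw
    simp only [X, Y, mem_union, mem_iUnion, Finset.mem_union, exists_prop, update_apply] at hw ⊢
    grind
  have hinter : ⋃ i ∈ (K ∩ L).erase j, A i ⊆ X ∩ Y := by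
    intro w hw
    simp only [X, Y, mem_inter_iff, mem_iUnion, Finset.mem_erase, Finset.mem_inter, exists_prop,
      update_apply] at hw ⊢
    grind
  have hU := (h (K ∪ L)).trans (setRk_mono hunion)
  have hI := (h ((K ∩ L).erase j)).trans (setRk_mono hinter)
  have hsub := M.setRk_inter_add_setRk_union_le X Y
  have hcard := Finset.card_union_add_card_inter K L
  have herase := Finset.card_erase_of_mem (Finset.mem_inter.2 ⟨hjK, hjL⟩)
  omega

theorem sum_ncard_update_sdiff_singleton_lt [Fintype ι] [DecidableEq ι] {j : ι} {x : α}
    (hA : (A j).Finite) (hx : x ∈ A j) :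
    ∑ i, (update A j (A j \ {x}) i).ncard < ∑ i, (A i).ncard := by
  rw [Fintype.sum_eq_add_sum_compl j, Fintype.sum_eq_add_sum_compl j (fun i => (A i).ncard),
    update_self, Finset.sum_congr rfl fun i hi => by rw [update_of_ne (by simpa using hi)]]
  exact Nat.add_lt_add_right (ncard_sdiff_singleton_lt_of_mem hx hA) _

theorem RadoCondition.exists_isIndepTransversal [Finite ι] (h : M.RadoCondition A)
    (hA : ∀ i, (A i).Finite) : ∃ a, M.IsIndepTransversal A a := by
  classical
  have := Fintype.ofFinite ι
  induction hn : ∑ i, (A i).ncard using Nat.strong_induction_on generalizing A with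
  | _ n ih =>
    by_cases hle : ∀ i, (A i).ncard ≤ 1
    · obtain ⟨a, rfl⟩ : ∃ a : ι → α, A = fun i => {a i} := by
        choose a ha using fun i =>
          ncard_eq_one.1 (le_antisymm (hle i) ((h.nonempty (hA i)).ncard_pos (hA i)))
        exact ⟨a, funext ha⟩
      exact ⟨a, h.isIndepTransversal_singleton⟩
    push Not at hle
    obtain ⟨j, hj⟩ := hle
    obtain ⟨x, y, hx, hy, hxy⟩ := (one_lt_ncard_iff (hA j)).1 hj
    have of_update : ∀ z ∈ A j, M.RadoCondition (update A j (A j \ {z})) →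
        ∃ a, M.IsIndepTransversal A a := fun z hz hz' => by
      have hsub : update A j (A j \ {z}) ≤ A := update_le_iff.2 ⟨sdiff_subset, fun _ _ => le_rfl⟩
      obtain ⟨a, ha⟩ := ih _ (hn ▸ sum_ncard_update_sdiff_singleton_lt (hA j) hz) hz'
        (fun i => (hA i).subset (hsub i)) rfl
      exact ⟨a, ha.mono hsub⟩
    rcases h.update_sdiff_singleton_or hxy with h' | h'
    exacts [of_update x hx h', of_update y hy h']

end Matroid

theorem rado_general {α : Type*} {M : Matroid α} [M.Finite] {m : ℕ}
    (A : Fin m → Set α)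
    (hyp : ∀ I : Finset (Fin m), (I.card : ℕ) ≤ M.setRk (⋃ i ∈ I, A i)) :
    ∃ a : Fin m → α, Function.Injective a ∧ (∀ i, a i ∈ A i) ∧
      M.Indep (Set.range a) := by
  have hrado : M.RadoCondition fun i => A i ∩ M.E := Matroid.RadoCondition.inter_ground hyp
  obtain ⟨a, ha⟩ :=
    hrado.exists_isIndepTransversal fun _ => M.ground_finite.subset inter_subset_right
  exact ⟨a, ha.mono fun _ => inter_subset_left⟩

/-- Rado's theorem: if `rank(⋃_{i ∈ I} A i) ≥ |I|` for every `I ⊆ [m]`, then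
the sets `A 1, …, A m` have an independent transversal. -/
theorem rado {α : Type*} {M : Matroid α} [M.Finite] {m : ℕ}
    (A : Fin m → Set α) (hA : ∀ i, A i ⊆ M.E)
    (hyp : ∀ I : Finset (Fin m), (I.card : ℕ) ≤ M.setRk (⋃ i ∈ I, A i)) :
    ∃ a : Fin m → α, Function.Injective a ∧ (∀ i, a i ∈ A i) ∧
      M.Indep (Set.range a) :=
  rado_general A hyp
end
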